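/- If H is an intra-regular LA-semihypergroup with pure left identity, then for any right hyperideal R and left hyperideal L of H, R ∩ L = R ∘ L. -/

import Mathlib

/-!
With a left identity, the left-invertive law gives the medial, paramedial and
left-commutative laws for products of subsets. Together they rewrite
`(x ∘ a²) ∘ y` as `a ∘ (z ∘ a)` with `z = ((x ∘ e) ∘ y) ∘ e`, so every `a ∈ R ∩ L`
lies in `a ∘ (H ∘ L) ⊆ R ∘ L`. The inclusion `R ∘ L ⊆ R ∩ L` holds in any hypergroupoid.
-/

open Set

/-- Elementwise extension of a hyperoperation to subsets:
`hmul op A B = ⋃_{a∈A, b∈B} op a b`. -/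
def hmul {H : Type*} (op : H → H → Set H) (A B : Set H) : Set H :=
  ⋃ a ∈ A, ⋃ b ∈ B, op a b

def IsLeftInvertive {H : Type*} (op : H → H → Set H) : Prop :=
  ∀ x y z : H, hmul op (op x y) {z} = hmul op (op z y) {x}

section

variable {H : Type*} {op : H → H → Set H}

lemma mem_hmul {A B : Set H} {t : H} :
    t ∈ hmul op A B ↔ ∃ a ∈ A, ∃ b ∈ B, t ∈ op a b := by
  simp [hmul]

lemma hmul_mono {A B C D : Set H} (hAC : A ⊆ C) (hBD : B ⊆ D) :
    hmul op A B ⊆ hmul op C D := by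
  simp only [subset_def, mem_hmul]
  rintro t ⟨a, ha, b, hb, ht⟩
  exact ⟨a, hAC ha, b, hBD hb, ht⟩

lemma hmul_singleton_singleton {a b : H} : hmul op {a} {b} = op a b := by
  simp [hmul]

lemma hmul_singleton_left_of_isLeftIdentity {e : H} (he : ∀ a : H, op e a = {a})
    (A : Set H) : hmul op {e} A = A := by
  ext t
  simp [hmul, he]

lemma mem_hmul_hmul {A B C : Set H} {t : H} :
    t ∈ hmul op (hmul op A B) C ↔
      ∃ a ∈ A, ∃ b ∈ B, ∃ c ∈ C, t ∈ hmul op (op a b) {c} := by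
  simp only [mem_hmul, mem_singleton_iff, exists_eq_left]
  constructor
  · rintro ⟨u, ⟨a, ha, b, hb, hu⟩, c, hc, ht⟩
    exact ⟨a, ha, b, hb, c, hc, u, hu, ht⟩
  · rintro ⟨a, ha, b, hb, c, hc, u, hu, ht⟩
    exact ⟨u, ⟨a, ha, b, hb, hu⟩, c, hc, ht⟩

lemma IsLeftInvertive.hmul_swap (hLA : IsLeftInvertive op) (A B C : Set H) :
    hmul op (hmul op A B) C = hmul op (hmul op C B) A := by
  ext t
  rw [mem_hmul_hmul, mem_hmul_hmul]
  constructor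
  · rintro ⟨a, ha, b, hb, c, hc, ht⟩
    exact ⟨c, hc, b, hb, a, ha, hLA a b c ▸ ht⟩
  · rintro ⟨c, hc, b, hb, a, ha, ht⟩
    exact ⟨a, ha, b, hb, c, hc, hLA a b c ▸ ht⟩

lemma IsLeftInvertive.hmul_medial (hLA : IsLeftInvertive op) (A B C D : Set H) :
    hmul op (hmul op A B) (hmul op C D) = hmul op (hmul op A C) (hmul op B D) := by
  rw [hLA.hmul_swap A B, hLA.hmul_swap C D B, hLA.hmul_swap (hmul op B D) C A]

lemma IsLeftInvertive.hmul_left_comm (hLA : IsLeftInvertive op) {e : H}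
    (he : ∀ a : H, op e a = {a}) (A B C : Set H) :
    hmul op A (hmul op B C) = hmul op B (hmul op A C) := by
  conv_lhs => rw [← hmul_singleton_left_of_isLeftIdentity he A]
  rw [hLA.hmul_medial {e} A B C, hmul_singleton_left_of_isLeftIdentity he B]

lemma IsLeftInvertive.hmul_paramedial (hLA : IsLeftInvertive op) {e : H}
    (he : ∀ a : H, op e a = {a}) (A B C D : Set H) :
    hmul op (hmul op A B) (hmul op C D) = hmul op (hmul op D C) (hmul op B A) := by
  have hAC : hmul op A C = hmul op (hmul op C A) {e} := by
    conv_lhs => rw [← hmul_singleton_left_of_isLeftIdentity he A]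
    exact hLA.hmul_swap {e} A C
  rw [hLA.hmul_medial A B C D, hAC, hLA.hmul_medial (hmul op C A) {e} B D,
    hmul_singleton_left_of_isLeftIdentity he D, hLA.hmul_swap (hmul op C A) B D,
    hLA.hmul_medial D B C A]

lemma IsLeftInvertive.hmul_hmul_sq (hLA : IsLeftInvertive op) {e : H}
    (he : ∀ a : H, op e a = {a}) (X A Y : Set H) :
    hmul op (hmul op X (hmul op A A)) Y =
      hmul op A (hmul op (hmul op (hmul op (hmul op X {e}) Y) {e}) A) := by
  set W := hmul op (hmul op X {e}) Y
  calc hmul op (hmul op X (hmul op A A)) Y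
      = hmul op (hmul op X (hmul op A A)) (hmul op {e} Y) := by
        rw [hmul_singleton_left_of_isLeftIdentity he Y]
    _ = hmul op (hmul op A A) W := by
        rw [hLA.hmul_medial, hLA.hmul_left_comm he]
    _ = hmul op (hmul op A A) (hmul op {e} W) := by
        rw [hmul_singleton_left_of_isLeftIdentity he W]
    _ = hmul op A (hmul op (hmul op W {e}) A) := by
        rw [hLA.hmul_paramedial he, hLA.hmul_left_comm he]

end

theorem stmt13_general {H : Type*} (op : H → H → Set H)
    (hLA : ∀ x y z : H, hmul op (op x y) {z} = hmul op (op z y) {x})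
    (e : H) (he : ∀ a : H, op e a = {a})
    (hir : ∀ a : H, ∃ x y : H, a ∈ hmul op (hmul op {x} (op a a)) {y})
    (R L : Set H)
    (hR : hmul op R Set.univ ⊆ R) (hL : hmul op Set.univ L ⊆ L) :
    R ∩ L = hmul op R L := by
  refine Subset.antisymm ?_ fun t ht ↦
    ⟨hR (hmul_mono subset_rfl (subset_univ L) ht),
      hL (hmul_mono (subset_univ R) subset_rfl ht)⟩
  rintro a ⟨haR, haL⟩
  obtain ⟨x, y, hxy⟩ := hir a
  rw [← hmul_singleton_singleton (op := op) (a := a),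
    IsLeftInvertive.hmul_hmul_sq hLA he] at hxy
  exact hmul_mono (singleton_subset_iff.mpr haR)
    (fun t ht ↦ hL (hmul_mono (subset_univ _) (singleton_subset_iff.mpr haL) ht)) hxy

theorem stmt13 {H : Type*} (op : H → H → Set H)
    (hne : ∀ a b : H, (op a b).Nonempty)
    (hLA : ∀ x y z : H, hmul op (op x y) {z} = hmul op (op z y) {x})
    (e : H) (he : ∀ a : H, op e a = {a})
    (hir : ∀ a : H, ∃ x y : H, a ∈ hmul op (hmul op {x} (op a a)) {y})
    (R L : Set H) (hRne : R.Nonempty) (hLne : L.Nonempty)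
    (hR : hmul op R Set.univ ⊆ R) (hL : hmul op Set.univ L ⊆ L) :
    R ∩ L = hmul op R L :=
  stmt13_general op hLA e he hir R L hR hL
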